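/- arXiv:1504.04933 — 6 statements merged into one kernel-verified Lean document; each statement's English description precedes it below -/
import Mathlib

section
/- Let k,n ≥ 1 and let y₁,…,y_{2k} ∈ ℝⁿ. Define x_{i,j} = ⟨y_i, y_j⟩, and for 1 ≤ i < j ≤ 2k define Q_{i,j} = Σ_{ℓ=1}^{k} (x_{i,2ℓ-1}·x_{j,2ℓ} − x_{i,2ℓ}·x_{j,2ℓ-1}). Also for 1 ≤ α < β ≤ n define J_{α,β} = Σ_{ℓ=1}^{k} (y_{2ℓ-1,α}·y_{2ℓ,β} − y_{2ℓ-1,β}·y_{2ℓ,α}). Then Σ_{ℓ=1}^{k} Q_{2ℓ-1,2ℓ} = Σ_{1 ≤ α < β ≤ n} J_{α,β}². -/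
/-!
`J` is the bivector `∑ ℓ, y_{2ℓ-1} ∧ y_{2ℓ}`. Being antisymmetric, the sum of `J_{α,β}²` over
`α < β` is half the sum over all ordered pairs `(α, β)`. Expanding the square and applying the
Binet–Cauchy identity `∑_{α,β} (a ∧ b)_{αβ} (c ∧ d)_{αβ} = 2 (⟨a,c⟩⟨b,d⟩ - ⟨a,d⟩⟨b,c⟩)` to each
pair of terms turns that full sum into `2 ∑ ℓ, Q_{2ℓ-1,2ℓ}`.
-/

open Finset

/-- Index of `y_{2ℓ-1}` (0-based) among the `2k` vectors. -/
def oddIdx {k : ℕ} (ℓ : Fin k) : Fin (2*k) := ⟨2*ℓ.val, by have := ℓ.isLt; omega⟩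

/-- Index of `y_{2ℓ}` (0-based) among the `2k` vectors. -/
def evenIdx {k : ℕ} (ℓ : Fin k) : Fin (2*k) := ⟨2*ℓ.val+1, by have := ℓ.isLt; omega⟩

/-- Euclidean inner product on `ℝⁿ`. -/
noncomputable def ip {n : ℕ} (u v : Fin n → ℝ) : ℝ := ∑ α, u α * v α

/-- The quadratic invariant `Q_{i,j} = Σ_ℓ (x_{i,2ℓ-1} x_{j,2ℓ} - x_{i,2ℓ} x_{j,2ℓ-1})`
where `x_{i,j} = ⟨y_i, y_j⟩`. -/
noncomputable def Qinv {k n : ℕ} (y : Fin (2*k) → Fin n → ℝ) (i j : Fin (2*k)) : ℝ :=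
  ∑ ℓ : Fin k, (ip (y i) (y (oddIdx ℓ)) * ip (y j) (y (evenIdx ℓ))
    - ip (y i) (y (evenIdx ℓ)) * ip (y j) (y (oddIdx ℓ)))

/-- The angular momentum component `J_{α,β}`. -/
noncomputable def angJ {k n : ℕ} (y : Fin (2*k) → Fin n → ℝ) (α β : Fin n) : ℝ :=
  ∑ ℓ : Fin k, (y (oddIdx ℓ) α * y (evenIdx ℓ) β - y (oddIdx ℓ) β * y (evenIdx ℓ) α)

theorem Finset.sum_sum_eq_two_nsmul_sum_sum_lt {ι M : Type*} [Fintype ι] [LinearOrder ι]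
    [AddCommMonoid M] (f : ι → ι → M) (hsymm : ∀ a b, f b a = f a b) (hdiag : ∀ a, f a a = 0) :
    ∑ a, ∑ b, f a b = 2 • ∑ a, ∑ b ∈ univ.filter (fun b => a < b), f a b := by
  have hsplit : ∀ a, ∑ b, f a b
      = ∑ b ∈ univ.filter (fun b => a < b), f a b + ∑ b ∈ univ.filter (fun b => b < a), f a b := by
    intro a
    rw [← sum_filter_add_sum_filter_not univ (fun b => a < b)]
    congr 1
    rw [← sum_filter_add_sum_filter_not _ (fun b => b < a), filter_filter, filter_filter]
    have hdiag_only : ∑ b ∈ univ.filter (fun b => ¬a < b ∧ ¬b < a), f a b = 0 :=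
      sum_eq_zero fun b hb => by
        obtain ⟨h₁, h₂⟩ := (mem_filter.1 hb).2
        rw [le_antisymm (not_lt.1 h₂) (not_lt.1 h₁), hdiag]
    rw [hdiag_only, add_zero]
    congr 1
    ext b
    simp only [mem_filter, mem_univ, true_and]
    exact ⟨And.right, fun h => ⟨h.asymm, h⟩⟩
  have hlower : ∑ a, ∑ b ∈ univ.filter (fun b => b < a), f a b
      = ∑ a, ∑ b ∈ univ.filter (fun b => a < b), f a b := by
    rw [sum_comm' (t' := univ) (s' := fun b => univ.filter (fun a => b < a)) (by simp)]
    exact sum_congr rfl fun a _ => sum_congr rfl fun b _ => hsymm a b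
  simp_rw [hsplit, sum_add_distrib, hlower, two_nsmul]

theorem Finset.sum_sq_sum_eq_sum_sum_sum_mul {ι κ R : Type*} [Fintype ι] [Fintype κ]
    [CommSemiring R] (u : κ → ι → R) :
    ∑ i, (∑ m, u m i) ^ 2 = ∑ m, ∑ ℓ, ∑ i, u m i * u ℓ i := by
  simp_rw [sq, sum_mul_sum]
  rw [sum_comm]
  simp_rw [sum_comm (s := (univ : Finset ι))]

def wedge {n : ℕ} (u v : Fin n → ℝ) (α β : Fin n) : ℝ := u α * v β - u β * v α

theorem sum_sum_wedge_mul_wedge {n : ℕ} (A B C D : Fin n → ℝ) :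
    ∑ α, ∑ β, wedge A B α β * wedge C D α β = 2 * (ip A C * ip B D - ip A D * ip B C) := by
  set g : Fin n → Fin n → ℝ := fun α β => A α * C α * (B β * D β) - A α * D α * (B β * C β)
  have hg : ∑ α, ∑ β, g α β = ip A C * ip B D - ip A D * ip B C := by
    simp only [g, ip, sum_sub_distrib, sum_mul_sum]
  calc ∑ α, ∑ β, wedge A B α β * wedge C D α β = ∑ α, ∑ β, (g α β + g β α) :=
        sum_congr rfl fun α _ => sum_congr rfl fun β _ => by simp only [wedge, g]; ring
    _ = 2 * (ip A C * ip B D - ip A D * ip B C) := by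
        rw [← hg]
        simp only [sum_add_distrib]
        rw [sum_comm (f := fun α β => g β α)]
        ring

theorem angJ_eq_sum_wedge {k n : ℕ} (y : Fin (2*k) → Fin n → ℝ) (α β : Fin n) :
    angJ y α β = ∑ ℓ, wedge (y (oddIdx ℓ)) (y (evenIdx ℓ)) α β := rfl

theorem angJ_swap {k n : ℕ} (y : Fin (2*k) → Fin n → ℝ) (α β : Fin n) :
    angJ y β α = -angJ y α β := by
  simp only [angJ, ← sum_neg_distrib]
  exact sum_congr rfl fun ℓ _ => by ring

theorem angJ_self {k n : ℕ} (y : Fin (2*k) → Fin n → ℝ) (α : Fin n) : angJ y α α = 0 := by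
  simpa [eq_neg_iff_add_eq_zero, ← two_mul] using angJ_swap y α α

theorem sum_sum_sq_angJ {k n : ℕ} (y : Fin (2*k) → Fin n → ℝ) :
    ∑ α, ∑ β, angJ y α β ^ 2 = 2 * ∑ ℓ, Qinv y (oddIdx ℓ) (evenIdx ℓ) := by
  have hexpand : ∑ α, ∑ β, angJ y α β ^ 2
      = ∑ m, ∑ ℓ, ∑ α, ∑ β, wedge (y (oddIdx m)) (y (evenIdx m)) α β
          * wedge (y (oddIdx ℓ)) (y (evenIdx ℓ)) α β := by
    simpa only [Fintype.sum_prod_type, ← angJ_eq_sum_wedge] using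
      sum_sq_sum_eq_sum_sum_sum_mul
        fun (ℓ : Fin k) (p : Fin n × Fin n) => wedge (y (oddIdx ℓ)) (y (evenIdx ℓ)) p.1 p.2
  simp only [hexpand, sum_sum_wedge_mul_wedge, Qinv, mul_sum]

theorem sum_Q_eq_sum_J_sq_general (k n : ℕ)
    (y : Fin (2*k) → Fin n → ℝ) :
    ∑ ℓ : Fin k, Qinv y (oddIdx ℓ) (evenIdx ℓ)
      = ∑ α : Fin n, ∑ β ∈ Finset.univ.filter (fun β => α < β), (angJ y α β)^2 := by
  have hhalf := sum_sum_eq_two_nsmul_sum_sum_lt (fun α β => angJ y α β ^ 2)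
    (fun α β => by rw [angJ_swap, neg_sq]) (fun α => by rw [angJ_self, sq, zero_mul])
  rw [sum_sum_sq_angJ, two_nsmul, ← two_mul] at hhalf
  exact mul_left_cancel₀ two_ne_zero hhalf

/-- `Σ_{ℓ=1}^k Q_{2ℓ-1,2ℓ} = Σ_{α<β} J_{α,β}²`. -/
theorem sum_Q_eq_sum_J_sq (k n : ℕ) (hk : 1 ≤ k) (hn : 1 ≤ n)
    (y : Fin (2*k) → Fin n → ℝ) :
    ∑ ℓ : Fin k, Qinv y (oddIdx ℓ) (evenIdx ℓ)
      = ∑ α : Fin n, ∑ β ∈ Finset.univ.filter (fun β => α < β), (angJ y α β)^2 :=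
  sum_Q_eq_sum_J_sq_general k n y
end

section
/- Let k be odd, r = (k+1)/2, and let x₁,…,x_{2k} be elements of a module over a ℚ-algebra. Set Q = Σ_{ℓ=1}^{k} x_{2ℓ-1} ∧ x_{2ℓ} and σ = Σ_{t=0}^{r-1} ((-1)^t (r−t−1)! t! / r!) Σ_{A ⊆ {1,…,r}, |A| = r−t−1} Σ_{B ⊆ {r+1,…,k}, |B| = t} ⋀_{ℓ ∈ A ∪ B} (x_{2ℓ-1} ∧ x_{2ℓ}). Then Q ∧ σ = x₁ ∧ x₂ ∧ ⋯ ∧ x_{k+1}. -/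
/-!
The 2-forms `e ℓ = x (2ℓ-1) ∧ x (2ℓ)` commute and square to zero, so they generate a commutative
subalgebra in which `(∑ ℓ ∈ U, e ℓ) ^ n = n! • ∑ (products of e over n-subsets of U)`.
With `a = ∑ ℓ ≤ r, e ℓ` and `b = ∑ ℓ > r, e ℓ` this turns `σ` into
`(r!)⁻¹ • ∑ t < r, a ^ (r-1-t) * (-b) ^ t`, and the geometric-sum identity gives
`Q * σ = (a + b) * σ = (r!)⁻¹ • (a ^ r - (-b) ^ r)`. Here `b ^ r = 0`, as `b` is a sum of only
`k - r < r` of the `e ℓ`, while `(r!)⁻¹ • a ^ r = e 1 * ⋯ * e r = x 1 ∧ ⋯ ∧ x (k+1)`.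
-/

open Finset Nat

theorem Finset.sum_powersetCard_sum_sdiff_insert {α β : Type*} [DecidableEq α] [AddCommMonoid β]
    (s : Finset α) (n : ℕ) (f : Finset α → β) :
    ∑ t ∈ s.powersetCard n, ∑ i ∈ s \ t, f (insert i t)
      = (n + 1) • ∑ u ∈ s.powersetCard (n + 1), f u := by
  have hcard : (n + 1) • ∑ u ∈ s.powersetCard (n + 1), f u
      = ∑ u ∈ s.powersetCard (n + 1), ∑ _i ∈ u, f u := by
    rw [smul_sum]
    exact sum_congr rfl fun u hu => by rw [sum_const, (mem_powersetCard.mp hu).2]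
  rw [hcard, sum_sigma', sum_sigma']
  refine sum_nbij' (fun p => ⟨insert p.2 p.1, p.2⟩) (fun p => ⟨p.1.erase p.2, p.2⟩)
    ?_ ?_ ?_ ?_ fun _ _ => rfl
  all_goals
    rintro ⟨t, i⟩ h
    simp only [mem_sigma, mem_powersetCard, mem_sdiff] at h ⊢
  · grind [card_insert_of_notMem]
  · grind [card_erase_of_mem]
  · simp [erase_insert h.2.2]
  · simp [insert_erase h.2]

theorem Finset.prod_map_sort {α M : Type*} [CommMonoid M] (s : Finset α) (r : α → α → Prop)
    [DecidableRel r] [IsTrans α r] [Std.Antisymm r] [Std.Total r] (f : α → M) :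
    ((s.sort r).map f).prod = ∏ i ∈ s, f i :=
  ((sort_perm_toList s r).map f).prod_eq.trans (prod_map_toList s f)

theorem Finset.sort_Icc_one (n : ℕ) :
    (Icc 1 n).sort = List.ofFn fun i : Fin n => (i : ℕ) + 1 := by
  have hrange : List.range' 1 n = List.ofFn fun i : Fin n => (i : ℕ) + 1 :=
    List.ext_getElem (by simp) (by simp [add_comm])
  rw [← hrange, ← List.toFinset_range'_1_1]
  exact (List.toFinset_sort _ List.nodup_range').mpr (List.pairwise_le_range' 1)

theorem List.prod_ofFn_two_mul {M : Type*} [Monoid M] (g : ℕ → M) (n : ℕ) :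
    (List.ofFn fun i : Fin (2 * n) => g i).prod
      = (List.ofFn fun i : Fin n => g (2 * i) * g (2 * i + 1)).prod := by
  induction n generalizing g with
  | zero => simp
  | succ n ih =>
    rw [List.ofFn_congr (by ring : 2 * (n + 1) = 2 * n + 1 + 1)]
    simp [ih fun j => g (j + 2), mul_add, mul_assoc, add_assoc]

theorem algebraMap_inv_natCast_smul_nsmul {R M : Type*} [CommRing R] [Algebra ℚ R]
    [AddCommGroup M] [Module R M] {n : ℕ} (hn : n ≠ 0) (x : M) :
    algebraMap ℚ R (n : ℚ)⁻¹ • n • x = x := by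
  rw [← Nat.cast_smul_eq_nsmul R, smul_smul, ← map_natCast (algebraMap ℚ R), ← map_mul,
    inv_mul_cancel₀ (by exact_mod_cast hn), map_one, one_smul]

section SquareZero

variable {ι A : Type*} [DecidableEq ι] [CommSemiring A] {e : ι → A}

theorem sum_mul_prod_eq_sum_sdiff_prod_insert (he : ∀ i, e i * e i = 0) (s t : Finset ι) :
    (∑ i ∈ s, e i) * ∏ j ∈ t, e j = ∑ i ∈ s \ t, ∏ j ∈ insert i t, e j := by
  rw [sum_mul, ← sum_subset sdiff_subset]
  · exact sum_congr rfl fun i hi => (prod_insert (mem_sdiff.mp hi).2).symm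
  · intro i hs hst
    rw [← mul_prod_erase t e (by simpa [hs] using hst), ← mul_assoc, he, zero_mul]

theorem sum_mul_sum_powersetCard_prod (he : ∀ i, e i * e i = 0) (s : Finset ι) (n : ℕ) :
    (∑ i ∈ s, e i) * ∑ t ∈ s.powersetCard n, ∏ j ∈ t, e j
      = (n + 1) • ∑ t ∈ s.powersetCard (n + 1), ∏ j ∈ t, e j := by
  simp_rw [mul_sum, sum_mul_prod_eq_sum_sdiff_prod_insert he]
  exact sum_powersetCard_sum_sdiff_insert s n fun t => ∏ j ∈ t, e j

theorem sum_pow_eq_factorial_nsmul_sum_powersetCard_prod (he : ∀ i, e i * e i = 0)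
    (s : Finset ι) (n : ℕ) :
    (∑ i ∈ s, e i) ^ n = n ! • ∑ t ∈ s.powersetCard n, ∏ j ∈ t, e j := by
  induction n with
  | zero => simp
  | succ n ih =>
    rw [_root_.pow_succ', ih, mul_smul_comm, sum_mul_sum_powersetCard_prod he, smul_smul,
      factorial_succ, mul_comm]

theorem sum_powersetCard_sum_powersetCard_prod_union {U V : Finset ι} (hUV : Disjoint U V)
    (a b : ℕ) :
    ∑ S ∈ U.powersetCard a, ∑ T ∈ V.powersetCard b, ∏ j ∈ S ∪ T, e j
      = (∑ S ∈ U.powersetCard a, ∏ j ∈ S, e j) * ∑ T ∈ V.powersetCard b, ∏ j ∈ T, e j := by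
  rw [sum_mul_sum]
  refine sum_congr rfl fun S hS => sum_congr rfl fun T hT => prod_union ?_
  exact hUV.mono (mem_powersetCard.mp hS).1 (mem_powersetCard.mp hT).1

end SquareZero

section QSigma

variable {ι R A : Type*} [DecidableEq ι] [CommRing R] [Algebra ℚ R] [CommRing A] [Algebra R A]
  {e : ι → A}

theorem algebraMap_smul_sum_prod_union_eq_pow_mul_pow (he : ∀ i, e i * e i = 0)
    {U V : Finset ι} (hUV : Disjoint U V) (r t : ℕ) :
    algebraMap ℚ R ((-1) ^ t * (r - 1 - t)! * t ! / r !) •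
        ∑ S ∈ U.powersetCard (r - 1 - t), ∑ T ∈ V.powersetCard t, ∏ j ∈ S ∪ T, e j
      = algebraMap ℚ R (r ! : ℚ)⁻¹ • ((-∑ i ∈ V, e i) ^ t * (∑ i ∈ U, e i) ^ (r - 1 - t)) := by
  rw [sum_powersetCard_sum_powersetCard_prod_union hUV, neg_pow (∑ i ∈ V, e i),
    sum_pow_eq_factorial_nsmul_sum_powersetCard_prod he,
    sum_pow_eq_factorial_nsmul_sum_powersetCard_prod he, div_eq_mul_inv, nsmul_eq_mul,
    nsmul_eq_mul]
  simp only [Algebra.smul_def, map_mul, map_pow, map_neg, map_one, map_natCast]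
  ring

theorem sum_mul_sigma_eq_prod (he : ∀ i, e i * e i = 0) {U V : Finset ι} (hUV : Disjoint U V)
    {r : ℕ} (hU : #U = r) (hV : #V < r) :
    (∑ i ∈ U ∪ V, e i) *
        ∑ t ∈ range r, algebraMap ℚ R ((-1) ^ t * (r - t - 1)! * t ! / r !) •
          ∑ S ∈ U.powersetCard (r - t - 1), ∑ T ∈ V.powersetCard t, ∏ j ∈ S ∪ T, e j
      = ∏ j ∈ U, e j := by
  simp_rw [Nat.sub_right_comm r _ 1, algebraMap_smul_sum_prod_union_eq_pow_mul_pow he hUV,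
    ← smul_sum, mul_smul_comm, sum_union hUV]
  have hgeom := Commute.mul_geom_sum₂ (Commute.all (∑ i ∈ U, e i) (-∑ i ∈ V, e i)) r
  rw [geom_sum₂_comm, sub_neg_eq_add] at hgeom
  rw [hgeom, neg_pow, sum_pow_eq_factorial_nsmul_sum_powersetCard_prod he,
    sum_pow_eq_factorial_nsmul_sum_powersetCard_prod he V, powersetCard_eq_empty.mpr hV,
    ← hU, powersetCard_self, sum_singleton, sum_empty, smul_zero, mul_zero, sub_zero]
  exact algebraMap_inv_natCast_smul_nsmul (factorial_ne_zero _) _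

end QSigma

open scoped IsMulCommutative in
theorem sum_mul_sigma_eq_sort_prod_of_commute {ι R E : Type*} [LinearOrder ι] [CommRing R]
    [Algebra ℚ R] [Ring E] [Algebra R E] {f : ι → E} (hcomm : ∀ i j, Commute (f i) (f j))
    (hf : ∀ i, f i * f i = 0) {U V : Finset ι} (hUV : Disjoint U V) {r : ℕ} (hU : #U = r)
    (hV : #V < r) :
    (∑ i ∈ U ∪ V, f i) *
        ∑ t ∈ range r, algebraMap ℚ R ((-1) ^ t * (r - t - 1)! * t ! / r !) •
          ∑ S ∈ U.powersetCard (r - t - 1), ∑ T ∈ V.powersetCard t, ((S ∪ T).sort.map f).prod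
      = (U.sort.map f).prod := by
  let C := Algebra.adjoin R (Set.range f)
  have : IsMulCommutative C := Algebra.isMulCommutative_adjoin R <| by
    rintro _ ⟨i, rfl⟩ _ ⟨j, rfl⟩
    exact hcomm i j
  let e : ι → C := fun i => ⟨f i, Algebra.subset_adjoin ⟨i, rfl⟩⟩
  have hsort (S : Finset ι) : (S.sort.map f).prod = C.val (∏ i ∈ S, e i) := by
    rw [← prod_map_sort S (· ≤ ·), map_list_prod, List.map_map]
    rfl
  have := congr_arg C.val
    (sum_mul_sigma_eq_prod (R := R) (e := e) (fun i => Subtype.ext (hf i)) hUV hU hV)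
  simpa [hsort, map_sum, e] using this

namespace ExteriorAlgebra

variable {R M : Type*} [CommRing R] [AddCommGroup M] [Module R M]

theorem commute_ι_mul_ι_ι (a b c : M) : Commute (ι R a * ι R b) (ι R c) := by
  have hac := eq_neg_of_add_eq_zero_left (ι_add_mul_swap (R := R) a c)
  have hbc := eq_neg_of_add_eq_zero_left (ι_add_mul_swap (R := R) b c)
  rw [Commute, SemiconjBy, mul_assoc, hbc, mul_neg, ← mul_assoc, hac, neg_mul, neg_neg, mul_assoc]

theorem ι_mul_ι_mul_self (a b : M) : (ι R a * ι R b) * (ι R a * ι R b) = 0 := by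
  rw [← mul_assoc, (commute_ι_mul_ι_ι a b a).eq, ← mul_assoc, ι_sq_zero, zero_mul, zero_mul]

end ExteriorAlgebra

open ExteriorAlgebra in
/-- For odd `k` and `r = (k+1)/2`, the explicit `(k-1)`-form `σ` satisfies
`Q ∧ σ = x₁ ∧ ⋯ ∧ x_{k+1}`, where `Q = Σ_{ℓ=1}^k x_{2ℓ-1} ∧ x_{2ℓ}`.
Vectors are indexed `x 1, …, x (2k)` and wedges over an index set are taken
in increasing order (the factors `x_{2ℓ-1} ∧ x_{2ℓ}` have even degree, so the
order is immaterial). -/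
theorem Q_wedge_sigma (R : Type*) [CommRing R] [Algebra ℚ R]
    (M : Type*) [AddCommGroup M] [Module R M]
    (k : ℕ) (hk : Odd k) (x : ℕ → M) :
    letI ι := ExteriorAlgebra.ι R (M := M)
    letI r := (k+1)/2
    letI Q : ExteriorAlgebra R M := ∑ ℓ ∈ Finset.Icc 1 k, ι (x (2*ℓ-1)) * ι (x (2*ℓ))
    letI σ : ExteriorAlgebra R M :=
      ∑ t ∈ Finset.range r,
        algebraMap ℚ R
          ((-1)^t * (Nat.factorial (r-t-1)) * (Nat.factorial t) / (Nat.factorial r)) •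
        ∑ A ∈ (Finset.Icc 1 r).powersetCard (r-t-1),
          ∑ B ∈ (Finset.Icc (r+1) k).powersetCard t,
            (((A ∪ B).sort (· ≤ ·)).map
              (fun ℓ => ι (x (2*ℓ-1)) * ι (x (2*ℓ)))).prod
    Q * σ = (List.ofFn fun t : Fin (k+1) => ι (x (t.val+1))).prod := by
  obtain ⟨m, rfl⟩ := hk
  rw [show (2 * m + 1 + 1) / 2 = m + 1 by omega]
  have hdisj : Disjoint (Icc 1 (m + 1)) (Icc (m + 1 + 1) (2 * m + 1)) :=
    disjoint_left.mpr fun ℓ h₁ h₂ => by simp only [mem_Icc] at h₁ h₂; omega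
  have hunion : Icc 1 (m + 1) ∪ Icc (m + 1 + 1) (2 * m + 1) = Icc 1 (2 * m + 1) := by
    ext ℓ; simp only [mem_union, mem_Icc]; omega
  rw [← hunion, sum_mul_sigma_eq_sort_prod_of_commute
      (fun _ _ => (commute_ι_mul_ι_ι _ _ _).mul_right (commute_ι_mul_ι_ι _ _ _))
      (fun _ => ι_mul_ι_mul_self _ _) hdisj (by simp) (by simp; omega),
    sort_Icc_one, List.map_ofFn, List.ofFn_congr (by ring : 2 * m + 1 + 1 = 2 * (m + 1))]
  simp only [Fin.val_cast]
  rw [List.prod_ofFn_two_mul (fun t => ι R (x (t + 1)))]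
  refine congrArg List.prod (List.ofFn_inj.mpr (funext fun i => ?_))
  simp only [Function.comp_apply]
  congr 3
end

section
/- Let k ≥ 1 and n ≥ k+1. If y = (y₁,…,y_{2k}) ∈ (ℝⁿ)^{2k} satisfies Σ_{ℓ=1}^{k} y_{2ℓ-1} ∧ y_{2ℓ} = 0, then the Oₙ-orbit and the SOₙ-orbit of y coincide. Consequently, the symplectic quotients Z/Oₙ and Z/SOₙ coincide, where Z is the zero set of the angular momentum map. -/
/-!
Put the vectors into the `n × 2k` matrix `Y` with columns `y₁, y₃, …` followed by
`y₂, y₄, …`. For the standard symplectic matrix `Ω`, `Y Ω Yᵀ = -(J_{α,β})`, so on the zero set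
the range of `Ω Yᵀ`, which has the rank of `Y`, lies in the kernel of `Y`; hence
`2 rank Y ≤ 2k` and the `yᵢ` span at most `k < n` dimensions. The Householder reflection `r`
in a nonzero vector orthogonal to all `yᵢ` is orthogonal of determinant `-1` and fixes every
`yᵢ`, so `g · y = (g r) · y` with `g r ∈ SOₙ` whenever `det g = -1`.
-/

open Finset

open Matrix

section Householder

variable {K m : Type*} [Field K] [Fintype m] [DecidableEq m]

noncomputable def householder (w : m → K) : Matrix m m K :=
  1 - (2 / (w ⬝ᵥ w)) • vecMulVec w w

theorem householder_transpose (w : m → K) : (householder w)ᵀ = householder w := by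
  simp [householder, transpose_vecMulVec]

theorem householder_mul_self {w : m → K} (hw : w ⬝ᵥ w ≠ 0) :
    householder w * householder w = 1 := by
  have hc : 2 / (w ⬝ᵥ w) * (w ⬝ᵥ w) = 2 := div_mul_cancel₀ _ hw
  simp only [householder, sub_mul, mul_sub, Matrix.one_mul, Matrix.mul_one, Matrix.smul_mul,
    Matrix.mul_smul, vecMulVec_mul_vecMulVec, vecMulVec_smul, smul_smul]
  rw [hc, mul_two, add_smul]
  abel

theorem householder_mem_orthogonalGroup {w : m → K} (hw : w ⬝ᵥ w ≠ 0) :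
    householder w ∈ orthogonalGroup m K := by
  rw [mem_orthogonalGroup_iff, householder_transpose, householder_mul_self hw]

theorem det_householder {w : m → K} (hw : w ⬝ᵥ w ≠ 0) : (householder w).det = -1 := by
  rw [householder, sub_eq_add_neg, ← neg_smul, ← smul_vecMulVec, vecMulVec_eq Unit,
    det_one_add_replicateCol_mul_replicateRow, dotProduct_smul, smul_eq_mul, neg_mul,
    div_mul_cancel₀ _ hw]
  norm_num

theorem householder_mulVec_of_dotProduct_eq_zero {w v : m → K} (hv : w ⬝ᵥ v = 0) :
    householder w *ᵥ v = v := by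
  simp [householder, sub_mulVec, smul_mulVec, vecMulVec_mulVec, hv]

end Householder

theorem det_eq_one_or_eq_neg_one_of_mem_orthogonalGroup {K m : Type*} [CommRing K]
    [NoZeroDivisors K] [Fintype m] [DecidableEq m] {g : Matrix m m K}
    (hg : g ∈ orthogonalGroup m K) : g.det = 1 ∨ g.det = -1 := by
  rw [mem_orthogonalGroup_iff] at hg
  have := congrArg det hg
  rw [det_mul, det_transpose, det_one] at this
  exact mul_self_eq_one_iff.mp this

theorem rank_le_card_of_mul_J_mul_transpose_eq_zero {K m l : Type*} [Field K] [Fintype m]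
    [Fintype l] [DecidableEq l] (Y : Matrix m (l ⊕ l) K) (hY : Y * J l K * Yᵀ = 0) :
    Y.rank ≤ Fintype.card l := by
  have h := rank_add_rank_le_card_of_mul_eq_zero (B := J l K * Yᵀ)
    (by rw [← Matrix.mul_assoc, hY])
  rw [rank_mul_eq_right_of_isUnit_det _ _ (isUnit_det_J l K), rank_transpose,
    Fintype.card_sum] at h
  omega

theorem exists_ne_zero_vecMul_eq_zero_of_rank_lt {K m n : Type*} [Field K] [Fintype m]
    [Fintype n] (Y : Matrix m n K) (hY : Y.rank < Fintype.card m) :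
    ∃ w ≠ 0, w ᵥ* Y = 0 := by
  have h := LinearMap.finrank_range_add_finrank_ker Yᵀ.mulVecLin
  rw [Module.finrank_fintype_fun_eq_card] at h
  have hker : LinearMap.ker Yᵀ.mulVecLin ≠ ⊥ := by
    intro hbot
    rw [hbot, finrank_bot, add_zero] at h
    have hrank : Module.finrank K (LinearMap.range Yᵀ.mulVecLin) = Y.rank := rank_transpose Y
    omega
  obtain ⟨w, hw, hw0⟩ := (Submodule.ne_bot_iff _).mp hker
  exact ⟨w, hw0, by simpa [mulVec_transpose] using hw⟩

theorem orbit_orthogonalGroup_eq_orbit_specialOrthogonalGroup {K ι m : Type*} [CommRing K]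
    [NoZeroDivisors K] [Fintype m] [DecidableEq m] (y : ι → m → K) {r : Matrix m m K}
    (hr : r ∈ orthogonalGroup m K) (hr_det : r.det = -1) (hry : ∀ i, r *ᵥ y i = y i) :
    {z : ι → m → K | ∃ g : orthogonalGroup m K, ∀ i, z i = (g : Matrix m m K) *ᵥ y i}
    = {z : ι → m → K | ∃ g : specialOrthogonalGroup m K,
        ∀ i, z i = (g : Matrix m m K) *ᵥ y i} := by
  ext z
  constructor
  · rintro ⟨g, hg⟩
    rcases det_eq_one_or_eq_neg_one_of_mem_orthogonalGroup g.2 with hdet | hdet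
    · exact ⟨⟨g, g.2, hdet⟩, hg⟩
    · have hgr_det : (g * r : Matrix m m K).det = 1 := by simp [det_mul, hdet, hr_det]
      refine ⟨⟨g * r, mul_mem g.2 hr, hgr_det⟩, fun i => ?_⟩
      rw [hg i, ← mulVec_mulVec, hry i]
  · rintro ⟨g, hg⟩
    exact ⟨⟨g, g.2.1⟩, hg⟩

theorem exists_eq_oddIdx_or_eq_evenIdx {k : ℕ} (i : Fin (2 * k)) :
    ∃ ℓ : Fin k, i = oddIdx ℓ ∨ i = evenIdx ℓ := by
  refine ⟨⟨i / 2, by omega⟩, ?_⟩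
  rcases Nat.mod_two_eq_zero_or_one i with h | h
  · exact Or.inl (Fin.ext (by simp only [oddIdx]; omega))
  · exact Or.inr (Fin.ext (by simp only [evenIdx]; omega))

def pairMatrix {k n : ℕ} (y : Fin (2 * k) → Fin n → ℝ) : Matrix (Fin n) (Fin k ⊕ Fin k) ℝ :=
  fromCols (of fun α ℓ => y (oddIdx ℓ) α) (of fun α ℓ => y (evenIdx ℓ) α)

theorem pairMatrix_mul_J_mul_transpose {k n : ℕ} (y : Fin (2 * k) → Fin n → ℝ) :
    pairMatrix y * J (Fin k) ℝ * (pairMatrix y)ᵀ = -of (angJ y) := by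
  rw [pairMatrix, J, fromCols_mul_fromBlocks, transpose_fromCols, fromCols_mul_fromRows]
  ext α β
  simp only [angJ, Matrix.mul_zero, Matrix.mul_one, Matrix.mul_neg, zero_add, add_zero,
    Matrix.add_apply, Matrix.neg_apply, mul_apply, of_apply, transpose_apply,
    ← Finset.sum_add_distrib, ← Finset.sum_neg_distrib]
  exact Finset.sum_congr rfl fun _ _ => by ring

theorem angJ_eq_zero {k n : ℕ} {y : Fin (2 * k) → Fin n → ℝ}
    (hJ : ∀ α β : Fin n, α < β → angJ y α β = 0) (α β : Fin n) : angJ y α β = 0 := by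
  have hswap : angJ y β α = -angJ y α β := by
    simp only [angJ, ← Finset.sum_neg_distrib]
    exact Finset.sum_congr rfl fun _ _ => by ring
  rcases lt_trichotomy α β with h | rfl | h
  · exact hJ α β h
  · linarith
  · linarith [hJ β α h]

theorem dotProduct_eq_zero_of_vecMul_pairMatrix_eq_zero {k n : ℕ} {y : Fin (2 * k) → Fin n → ℝ}
    {w : Fin n → ℝ} (hw : w ᵥ* pairMatrix y = 0) (i : Fin (2 * k)) : w ⬝ᵥ y i = 0 := by
  obtain ⟨ℓ, rfl | rfl⟩ := exists_eq_oddIdx_or_eq_evenIdx i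
  · have := congrFun hw (Sum.inl ℓ)
    simpa [pairMatrix, vecMul, dotProduct] using this
  · have := congrFun hw (Sum.inr ℓ)
    simpa [pairMatrix, vecMul, dotProduct] using this

theorem orbit_O_eq_orbit_SO_general (k n : ℕ) (hn : k + 1 ≤ n)
    (y : Fin (2*k) → Fin n → ℝ)
    (hJ : ∀ α β : Fin n, α < β → angJ y α β = 0) :
    {z : Fin (2*k) → Fin n → ℝ | ∃ g : Matrix.orthogonalGroup (Fin n) ℝ,
        ∀ i, z i = Matrix.mulVec (g : Matrix (Fin n) (Fin n) ℝ) (y i)}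
    = {z : Fin (2*k) → Fin n → ℝ | ∃ g : Matrix.specialOrthogonalGroup (Fin n) ℝ,
        ∀ i, z i = Matrix.mulVec (g : Matrix (Fin n) (Fin n) ℝ) (y i)} := by
  have hY : pairMatrix y * J (Fin k) ℝ * (pairMatrix y)ᵀ = 0 := by
    rw [pairMatrix_mul_J_mul_transpose, neg_eq_zero]
    exact funext₂ (angJ_eq_zero hJ)
  have hrank : (pairMatrix y).rank < Fintype.card (Fin n) := by
    have := rank_le_card_of_mul_J_mul_transpose_eq_zero _ hY
    simp only [Fintype.card_fin] at this ⊢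
    omega
  obtain ⟨w, hw0, hw⟩ := exists_ne_zero_vecMul_eq_zero_of_rank_lt _ hrank
  have hww : w ⬝ᵥ w ≠ 0 := dotProduct_self_eq_zero.not.mpr hw0
  exact orbit_orthogonalGroup_eq_orbit_specialOrthogonalGroup y
    (householder_mem_orthogonalGroup hww) (det_householder hww)
    fun i => householder_mulVec_of_dotProduct_eq_zero
      (dotProduct_eq_zero_of_vecMul_pairMatrix_eq_zero hw i)

/-- For `n ≥ k+1`, at any point of the zero angular momentum set, the `Oₙ`-orbit coincides
with the `SOₙ`-orbit. -/
theorem orbit_O_eq_orbit_SO (k n : ℕ) (hk : 1 ≤ k) (hn : k + 1 ≤ n)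
    (y : Fin (2*k) → Fin n → ℝ)
    (hJ : ∀ α β : Fin n, α < β → angJ y α β = 0) :
    {z : Fin (2*k) → Fin n → ℝ | ∃ g : Matrix.orthogonalGroup (Fin n) ℝ,
        ∀ i, z i = Matrix.mulVec (g : Matrix (Fin n) (Fin n) ℝ) (y i)}
    = {z : Fin (2*k) → Fin n → ℝ | ∃ g : Matrix.specialOrthogonalGroup (Fin n) ℝ,
        ∀ i, z i = Matrix.mulVec (g : Matrix (Fin n) (Fin n) ℝ) (y i)} :=
  orbit_O_eq_orbit_SO_general k n hn y hJ
end

section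
/- Let n ≤ k. Define y ∈ (ℝⁿ)^{2k} by y_{2ℓ-1} = y_{2ℓ} = e_ℓ (the ℓ-th standard basis vector of ℝⁿ) for ℓ ≤ n and y_{2ℓ-1} = y_{2ℓ} = 0 for ℓ > n. Then y lies in the zero set of the angular momentum map (Σ_{ℓ} y_{2ℓ-1} ∧ y_{2ℓ} = 0) and y has trivial Oₙ-isotropy group; in particular its Oₙ-orbit and SOₙ-orbit do not coincide when n ≥ 1. -/
open Finset

/-! The vectors `y_{2ℓ-1}`, `ℓ ≤ n`, of the shell point form the standard basis, so a matrix is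
determined by how it moves the point: its isotropy is trivial. Each pair `y_{2ℓ-1} = y_{2ℓ}`
contributes `y_{2ℓ-1} ∧ y_{2ℓ} = 0` to the angular momentum. Finally, if the image `r • y` of a
point with trivial isotropy under a reflection `r` were also `s • y` for some `s ∈ SOₙ`, then
`s⁻¹ r` would fix `y`, forcing `r = s` although `det r = -1`. -/

open Matrix

theorem angJ_eq_zero_of_evenIdx_eq_oddIdx {k n : ℕ} {y : Fin (2*k) → Fin n → ℝ}
    (hy : ∀ ℓ, y (evenIdx ℓ) = y (oddIdx ℓ)) (α β : Fin n) : angJ y α β = 0 :=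
  Finset.sum_eq_zero fun ℓ _ => by rw [hy ℓ, mul_comm, sub_self]

namespace Matrix

theorem exists_mem_orthogonalGroup_det_eq_neg_one (ι : Type*) [Fintype ι] [DecidableEq ι]
    [Nonempty ι] : ∃ r ∈ orthogonalGroup ι ℝ, r.det = -1 := by
  obtain ⟨i₀⟩ := ‹Nonempty ι›
  set d : ι → ℝ := Function.update 1 i₀ (-1)
  have hdd : ∀ j, d j * d j = 1 := by
    intro j
    by_cases hj : j = i₀ <;> simp [d, hj]
  refine ⟨diagonal d, ?_, ?_⟩
  · rw [mem_orthogonalGroup_iff, diagonal_transpose, diagonal_mul_diagonal]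
    simp_rw [hdd]
    exact diagonal_one
  · rw [det_diagonal, Finset.prod_update_of_mem (Finset.mem_univ _)]
    simp

theorem orthogonalOrbit_ne_specialOrthogonalOrbit {ι I : Type*} [Fintype ι] [DecidableEq ι]
    [Nonempty ι] (y : I → ι → ℝ)
    (hy : ∀ g : orthogonalGroup ι ℝ, (∀ i, (g : Matrix ι ι ℝ) *ᵥ y i = y i) → g = 1) :
    {z : I → ι → ℝ | ∃ g : orthogonalGroup ι ℝ, ∀ i, z i = (g : Matrix ι ι ℝ) *ᵥ y i}
      ≠ {z | ∃ g : specialOrthogonalGroup ι ℝ, ∀ i, z i = (g : Matrix ι ι ℝ) *ᵥ y i} := by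
  obtain ⟨r, hr, hdet⟩ := exists_mem_orthogonalGroup_det_eq_neg_one ι
  intro horbit
  obtain ⟨s, hs⟩ :
      ∃ s : specialOrthogonalGroup ι ℝ, ∀ i, r *ᵥ y i = (s : Matrix ι ι ℝ) *ᵥ y i := by
    have hmem : (fun i => r *ᵥ y i) ∈
        {z : I → ι → ℝ | ∃ g : orthogonalGroup ι ℝ, ∀ i, z i = (g : Matrix ι ι ℝ) *ᵥ y i} :=
      ⟨⟨r, hr⟩, fun _ => rfl⟩
    rwa [horbit] at hmem
  obtain ⟨hsO, hsdet⟩ := mem_specialOrthogonalGroup_iff.mp s.2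
  have hfix : (⟨s, hsO⟩ : orthogonalGroup ι ℝ)⁻¹ * ⟨r, hr⟩ = 1 := hy _ fun i => by
    rw [UnitaryGroup.mul_val, UnitaryGroup.inv_val, ← mulVec_mulVec, hs, mulVec_mulVec,
      UnitaryGroup.star_mul_self, one_mulVec]
  have hrs : r = s := congrArg Subtype.val (inv_mul_eq_one.mp hfix).symm
  norm_num [← hrs, hdet] at hsdet

end Matrix

def shellPoint (k n : ℕ) : Fin (2*k) → Fin n → ℝ := fun i α => if i.val / 2 = α.val then 1 else 0

theorem shellPoint_evenIdx {k n : ℕ} (ℓ : Fin k) :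
    shellPoint k n (evenIdx ℓ) = shellPoint k n (oddIdx ℓ) := by
  funext α
  simp only [shellPoint, evenIdx, oddIdx]
  congr 2
  omega

theorem shellPoint_oddIdx_castLE {k n : ℕ} (hnk : n ≤ k) (α : Fin n) :
    shellPoint k n (oddIdx (Fin.castLE hnk α)) = Pi.single α 1 := by
  funext β
  simp [shellPoint, oddIdx, Pi.single_apply, Fin.ext_iff, eq_comm]

theorem eq_of_mulVec_shellPoint_eq {k n : ℕ} (hnk : n ≤ k) {M N : Matrix (Fin n) (Fin n) ℝ}
    (h : ∀ i, M *ᵥ shellPoint k n i = N *ᵥ shellPoint k n i) : M = N :=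
  ext_of_mulVec_single fun α => by
    simpa only [shellPoint_oddIdx_castLE] using h (oddIdx (Fin.castLE hnk α))

theorem eq_one_of_mulVec_shellPoint_eq_self {k n : ℕ} (hnk : n ≤ k)
    (g : orthogonalGroup (Fin n) ℝ)
    (hg : ∀ i, (g : Matrix (Fin n) (Fin n) ℝ) *ᵥ shellPoint k n i = shellPoint k n i) : g = 1 :=
  Subtype.ext <| eq_of_mulVec_shellPoint_eq hnk fun i => by
    rw [hg, UnitaryGroup.one_val, one_mulVec]

/-- For `n ≤ k`, the point with `q_ℓ = p_ℓ = e_ℓ` for `ℓ ≤ n` and `q_ℓ = p_ℓ = 0` for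
`ℓ > n` lies on the shell, has trivial `Oₙ`-isotropy, and its `Oₙ`- and `SOₙ`-orbits do not
coincide. (Here `y i α = 1` iff the particle number `i/2` equals `α`.) -/
theorem shell_point_trivial_isotropy (k n : ℕ) (hn : 1 ≤ n) (hnk : n ≤ k) :
    letI y : Fin (2*k) → Fin n → ℝ := fun i α => if i.val / 2 = α.val then 1 else 0
    (∀ α β : Fin n, α < β → angJ y α β = 0) ∧
    (∀ g : Matrix.orthogonalGroup (Fin n) ℝ,
        (∀ i, Matrix.mulVec (g : Matrix (Fin n) (Fin n) ℝ) (y i) = y i) → g = 1) ∧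
    {z : Fin (2*k) → Fin n → ℝ | ∃ g : Matrix.orthogonalGroup (Fin n) ℝ,
        ∀ i, z i = Matrix.mulVec (g : Matrix (Fin n) (Fin n) ℝ) (y i)}
      ≠ {z : Fin (2*k) → Fin n → ℝ | ∃ g : Matrix.specialOrthogonalGroup (Fin n) ℝ,
        ∀ i, z i = Matrix.mulVec (g : Matrix (Fin n) (Fin n) ℝ) (y i)} := by
  have : Nonempty (Fin n) := ⟨⟨0, hn⟩⟩
  exact ⟨fun α β _ => angJ_eq_zero_of_evenIdx_eq_oddIdx shellPoint_evenIdx α β,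
    eq_one_of_mulVec_shellPoint_eq_self hnk,
    orthogonalOrbit_ne_specialOrthogonalOrbit _ (eq_one_of_mulVec_shellPoint_eq_self hnk)⟩
end

section
/- Let n ≥ 2, k ≥ 1. With D_{i,j} = Q_{n,i,j} − Q_{n-1,i,j} denoting the difference of the quadratic invariants computed in ℝⁿ and in the first n−1 coordinates, one has Σ_{ℓ=1}^{k} D_{2ℓ-1,2ℓ} = Σ_{α=1}^{n-1} J_{α,n}², where J_{α,n} = Σ_{ℓ=1}^{k}(y_{2ℓ-1,α} y_{2ℓ,n} − y_{2ℓ-1,n} y_{2ℓ,α}). -/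
open Finset

/-- Truncated inner product using only the first `n-1` coordinates. -/
noncomputable def tip {n : ℕ} (u v : Fin n → ℝ) : ℝ :=
  ∑ α ∈ Finset.univ.filter (fun α : Fin n => α.val < n - 1), u α * v α

/-- The truncated quadratic invariant `Q_{n-1,i,j}`. -/
noncomputable def QinvTrunc {k n : ℕ} (y : Fin (2*k) → Fin n → ℝ) (i j : Fin (2*k)) : ℝ :=
  ∑ ℓ : Fin k, (tip (y i) (y (oddIdx ℓ)) * tip (y j) (y (evenIdx ℓ))
    - tip (y i) (y (evenIdx ℓ)) * tip (y j) (y (oddIdx ℓ)))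

/-! Adding one coordinate, with values `a, b, a', b'`, to four vectors `u, v, u', v'` changes the
`2 × 2` determinant `⟨u,u'⟩⟨v,v'⟩ - ⟨u,v'⟩⟨v,u'⟩` by the sum of the products of the
plane components `u_α b - a v_α` and `u'_α b' - a' v'_α`. Summed over all pairs `(ℓ, m)` of
the `k` pairs `(y_{2ℓ-1}, y_{2ℓ})`, these products assemble into `Σ_α J_{α,n}²`. -/

theorem gram_det_add_coord_sub {R ι : Type*} [CommRing R] (s : Finset ι) (u v u' v' : ι → R)
    (a b a' b' : R) :
    ((∑ α ∈ s, u α * u' α) + a * a') * ((∑ α ∈ s, v α * v' α) + b * b')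
        - ((∑ α ∈ s, u α * v' α) + a * b') * ((∑ α ∈ s, v α * u' α) + b * a')
        - ((∑ α ∈ s, u α * u' α) * (∑ α ∈ s, v α * v' α)
          - (∑ α ∈ s, u α * v' α) * (∑ α ∈ s, v α * u' α))
      = ∑ α ∈ s, (u α * b - a * v α) * (u' α * b' - a' * v' α) := by
  have expand : ∑ α ∈ s, (u α * b - a * v α) * (u' α * b' - a' * v' α)
      = (∑ α ∈ s, u α * u' α) * (b * b') - (∑ α ∈ s, u α * v' α) * (b * a')
        - (∑ α ∈ s, v α * u' α) * (a * b') + (∑ α ∈ s, v α * v' α) * (a * a') := by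
    simp only [sum_mul, ← sum_sub_distrib, ← sum_add_distrib]
    exact sum_congr rfl fun α _ => by ring
  rw [expand]
  ring

theorem ip_eq_tip_add {n : ℕ} (hn : 0 < n) (u v : Fin n → ℝ) :
    ip u v = tip u v + u ⟨n - 1, by omega⟩ * v ⟨n - 1, by omega⟩ := by
  have last : univ.filter (fun α : Fin n => ¬ α.val < n - 1) = {⟨n - 1, by omega⟩} := by
    ext α
    simp only [mem_filter, mem_univ, true_and, mem_singleton, Fin.ext_iff]
    omega
  rw [ip, tip, ← sum_filter_add_sum_filter_not univ (fun α : Fin n => α.val < n - 1), last,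
    sum_singleton]

theorem ip_det_sub_tip_det {n : ℕ} (hn : 0 < n) (u v u' v' : Fin n → ℝ) :
    ip u u' * ip v v' - ip u v' * ip v u' - (tip u u' * tip v v' - tip u v' * tip v u')
      = ∑ α ∈ univ.filter (fun α : Fin n => α.val < n - 1),
          (u α * v ⟨n - 1, by omega⟩ - u ⟨n - 1, by omega⟩ * v α)
            * (u' α * v' ⟨n - 1, by omega⟩ - u' ⟨n - 1, by omega⟩ * v' α) := by
  simp only [ip_eq_tip_add hn]
  exact gram_det_add_coord_sub _ u v u' v' _ _ _ _

/-- `Σ_{ℓ=1}^k D_{2ℓ-1,2ℓ} = Σ_{α=1}^{n-1} J_{α,n}²` where `D_{i,j} = Q_{n,i,j} - Q_{n-1,i,j}`. -/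
theorem sum_D_eq_sum_J_sq (n k : ℕ) (hn : 2 ≤ n)
    (y : Fin (2*k) → Fin n → ℝ) :
    ∑ ℓ : Fin k, (Qinv y (oddIdx ℓ) (evenIdx ℓ) - QinvTrunc y (oddIdx ℓ) (evenIdx ℓ))
      = ∑ α ∈ Finset.univ.filter (fun α : Fin n => α.val < n - 1),
          (angJ y α ⟨n-1, by omega⟩)^2 := by
  simp only [angJ, sq, sum_mul_sum]
  rw [sum_comm]
  refine sum_congr rfl fun ℓ _ => ?_
  rw [Qinv, QinvTrunc, ← sum_sub_distrib, sum_comm]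
  exact sum_congr rfl fun m _ => ip_det_sub_tip_det (by omega) _ _ _ _
end

section
/- The rational function H(t) = (1 + 4t² + 4t⁴ + t⁶)/(1 − t²)⁶ satisfies the Gorenstein functional equation H(1/t) = (−1)⁶ t⁶ H(t), and its Laurent expansion at t = 1 has leading terms H(t) = (5/32)(1−t)^{−6} + 0·(1−t)^{−5} + (11/128)(1−t)^{−4} + (11/128)(1−t)^{−3} + ⋯. In particular, the leading coefficient 5/32 is not the reciprocal of a positive integer. -/
open Filter Topology

/-!
The functional equation holds because the numerator `1 + 4t² + 4t⁴ + t⁶` is palindromic of degree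
`6` while `(1 - t⁻²)⁶ = t⁻¹² (1 - t²)⁶`. For the Laurent expansion, write `1 - t² = (1 - t)(1 + t)`;
after subtracting the three claimed principal parts and multiplying by `(1 - t)²`, what is left is
a polynomial divided by `(1 + t)⁶`, which is continuous at `t = 1` with value `11/128`.
-/

noncomputable section

namespace HilbertSeriesM022

def hilbertSeries (t : ℝ) : ℝ := (1 + 4*t^2 + 4*t^4 + t^6) / (1 - t^2)^6

def laurentRemainder (t : ℝ) : ℝ :=
  (43/64 + 147/128*t + 15/8*t^2 + 77/64*t^3 + 33/64*t^4 + 11/128*t^5) / (1 + t)^6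

theorem hilbertSeries_inv {t : ℝ} (ht : t ≠ 0) (ht2 : t^2 ≠ 1) :
    hilbertSeries (1/t) = (-1)^6 * t^6 * hilbertSeries t := by
  have hden : (1 : ℝ) - t^2 ≠ 0 := sub_ne_zero.mpr ht2.symm
  have hden_inv : 1 - (1/t)^2 = -(1 - t^2) / t^2 := by field_simp; ring
  unfold hilbertSeries
  rw [hden_inv]
  field_simp
  ring

theorem one_sub_sq_mul_hilbertSeries_sub_principalPart {t : ℝ} (ht : t ≠ 1) (ht' : t ≠ -1) :
    (1-t)^2 * (hilbertSeries t - (5/32)*(1-t)^(-6 : ℤ) - (11/128)*(1-t)^(-4 : ℤ)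
      - (11/128)*(1-t)^(-3 : ℤ)) = laurentRemainder t := by
  have h1 : (1 : ℝ) - t ≠ 0 := sub_ne_zero.mpr ht.symm
  have h2 : (1 : ℝ) + t ≠ 0 := fun h => ht' (by linarith)
  have hfactor : (1 : ℝ) - t^2 = (1 - t) * (1 + t) := by ring
  unfold hilbertSeries laurentRemainder
  rw [hfactor]
  simp only [zpow_neg, zpow_ofNat]
  field_simp
  ring

theorem tendsto_laurentRemainder :
    Tendsto laurentRemainder (𝓝[≠] 1) (𝓝 (11/128)) := by
  have hcont : ContinuousAt laurentRemainder 1 := by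
    unfold laurentRemainder
    exact ContinuousAt.div (by fun_prop) (by fun_prop) (by norm_num)
  have hval : laurentRemainder 1 = 11/128 := by norm_num [laurentRemainder]
  exact hval ▸ hcont.tendsto.mono_left nhdsWithin_le_nhds

theorem tendsto_one_sub_sq_mul_hilbertSeries_sub_principalPart :
    Tendsto (fun t : ℝ => (1-t)^2 * (hilbertSeries t - (5/32)*(1-t)^(-6 : ℤ)
        - (11/128)*(1-t)^(-4 : ℤ) - (11/128)*(1-t)^(-3 : ℤ)))
      (𝓝[≠] 1) (𝓝 (11/128)) := by
  refine tendsto_laurentRemainder.congr' ?_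
  have hne : {t : ℝ | t ≠ -1} ∈ 𝓝[≠] (1 : ℝ) :=
    nhdsWithin_le_nhds (isOpen_ne.mem_nhds (by norm_num))
  filter_upwards [hne, self_mem_nhdsWithin] with t ht' ht
  exact (one_sub_sq_mul_hilbertSeries_sub_principalPart ht ht').symm

theorem five_div_thirtyTwo_ne_one_div_nat {m : ℕ} (hm : 0 < m) : (5/32 : ℝ) ≠ 1/(m : ℝ) := by
  intro h
  have hm' : (m : ℝ) ≠ 0 := Nat.cast_ne_zero.mpr hm.ne'
  field_simp at h
  have : 5 * m = 32 := by exact_mod_cast h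
  omega

end HilbertSeriesM022

end

open HilbertSeriesM022 in
/-- The Hilbert series `H(t) = (1 + 4t² + 4t⁴ + t⁶)/(1-t²)⁶` of `ℝ[M_{0,2,2}]` satisfies the
Gorenstein functional equation `H(1/t) = (-1)⁶ t⁶ H(t)`, its Laurent expansion at `t = 1`
begins `(5/32)(1-t)⁻⁶ + 0·(1-t)⁻⁵ + (11/128)(1-t)⁻⁴ + (11/128)(1-t)⁻³ + O((1-t)⁻²)`, and
the leading coefficient `5/32` is not the reciprocal of a positive integer. -/
theorem hilbert_series_M022 :
    letI H : ℝ → ℝ := fun t => (1 + 4*t^2 + 4*t^4 + t^6) / (1 - t^2)^6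
    (∀ t : ℝ, t ≠ 0 → t^2 ≠ 1 → H (1/t) = (-1)^6 * t^6 * H t) ∧
    (∃ c : ℝ, Tendsto
      (fun t : ℝ => (1-t)^2 *
        (H t - (5/32)*(1-t)^(-6 : ℤ) - (11/128)*(1-t)^(-4 : ℤ) - (11/128)*(1-t)^(-3 : ℤ)))
      (nhdsWithin 1 {t : ℝ | t ≠ 1}) (nhds c)) ∧
    ¬ ∃ m : ℕ, 0 < m ∧ (5/32 : ℝ) = 1/(m : ℝ) :=
  ⟨fun _ ht ht2 => hilbertSeries_inv ht ht2,
    ⟨11/128, tendsto_one_sub_sq_mul_hilbertSeries_sub_principalPart⟩,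
    fun ⟨_, hm, h⟩ => five_div_thirtyTwo_ne_one_div_nat hm h⟩
end
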